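/- arXiv:1503.08166 — 2 statements merged into one kernel-verified Lean document; each statement's English description precedes it below -/
import Mathlib

section
/- Let K be an infinite perfectly normal compact Hausdorff space. Then the unit sphere of C(K) contains a (1+)-separated subset of cardinality equal to the density character of C(K); that is, there exists a set A of norm-one functions in C(K) with |A| = d(C(K)) and ‖f − g‖ > 1 for all distinct f, g ∈ A. Moreover, if K has no isolated points, then such a set A can be chosen to consist of locally sign-changing functions. -/
open Cardinal

/-- The density character of a topological space: the least cardinality of a
dense subset. -/
noncomputable def densityCharacter (X : Type*) [TopologicalSpace X] : Cardinal :=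
  sInf { c : Cardinal | ∃ s : Set X, Dense s ∧ #s = c }

/-- A continuous real-valued function on `K` is locally sign-changing if at
every non-isolated point `z` with `f z = 0`, the function takes both strictly
positive and strictly negative values in every open neighbourhood of `z`. -/
def LocallySignChanging {K : Type*} [TopologicalSpace K] (f : C(K, ℝ)) : Prop :=
  ∀ z : K, ¬ IsOpen ({z} : Set K) → f z = 0 →
    ∀ U : Set K, IsOpen U → z ∈ U →
      (∃ t ∈ U, 0 < f t) ∧ (∃ t ∈ U, f t < 0)

/-!
Perfect normality makes every closed set a zero set, which yields for disjoint closed `A`, `B` a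
norm-one function `f` that changes sign at each of its zeros, with `f = 1` on `A` and `f = -1`
on `B`.

If `d(C(K)) > ℵ₀`, a family of fewer than `d(C(K))` functions, together with the indicators of the
countably many isolated points, cannot separate the points of `K`: by Stone–Weierstrass a separating
family of size `κ` generates a dense `ℚ`-subalgebra of size at most `κ ⊔ ℵ₀`. So the family agrees
at some `x ≠ y` with `x` not isolated, and the `f` above for `A` a closed neighbourhood of `x` and
`B = {y}` is at distance `> 1` from each sign-changing member of it; a transfinite recursion of
length `d(C(K))` builds the set. If `d(C(K)) = ℵ₀`, taking `A = {xₙ}` and `B = {x₀, …, xₙ₋₁}`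
along a sequence of distinct points gives `‖fₙ - fₘ‖ = 2`.
-/

universe u

open Set Topology Function

theorem densityCharacter_le {X : Type*} [TopologicalSpace X] {s : Set X} (hs : Dense s) :
    densityCharacter X ≤ #s :=
  csInf_le (OrderBot.bddBelow _) ⟨s, hs, rfl⟩

theorem aleph0_le_densityCharacter (X : Type*) [TopologicalSpace X] [T1Space X] [Infinite X] :
    ℵ₀ ≤ densityCharacter X := by
  refine le_csInf ⟨_, Set.univ, dense_univ, rfl⟩ ?_
  rintro _ ⟨s, hs, rfl⟩
  by_contra! hlt
  have hfin : s.Finite := lt_aleph0_iff_set_finite.1 hlt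
  have hs_univ : s = Set.univ := hfin.isClosed.closure_eq.symm.trans hs.closure_eq
  exact infinite_univ (hs_univ ▸ hfin)

theorem Pairwise.injective_of_irrefl {ι α : Type*} {R : α → α → Prop} {F : ι → α}
    (hirr : ∀ a, ¬R a a) (hF : Pairwise (R on F)) : Injective F := fun i j hij =>
  by_contra fun hne => hirr (F j) (by simpa only [onFun, hij] using hF hne)

-- Greedy recursion along the initial well-order of `κ`: each stage sees fewer than `κ` earlier
-- choices. `P` is required of the earlier choices only, so it need not be carried through the
-- recursion.
theorem exists_pairwise_of_forall_mk_lt {α : Type u} {κ : Cardinal.{u}} (P : α → Prop)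
    {R : α → α → Prop} (hsymm : ∀ a b, R a b → R b a) (hirr : ∀ a, ¬R a a)
    (h : ∀ T : Set α, #T < κ → ∃ a, P a ∧ ∀ b ∈ T, P b → R a b) :
    ∃ A : Set α, #A = κ ∧ (∀ a ∈ A, P a) ∧ A.Pairwise R := by
  choose next hnextP hnextR using h
  let F : κ.ord.ToType → α := wellFounded_lt.fix fun i F' =>
    next (range fun j : Iio i => F' j j.2) (mk_range_le.trans_lt (by simpa using mk_Iio_lt i))
  have hF (i) : F i = next (range fun j : Iio i => F j)
      (mk_range_le.trans_lt (by simpa using mk_Iio_lt i)) :=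
    wellFounded_lt.fix_eq _ i
  have hP (i) : P (F i) := hF i ▸ hnextP _ _
  have hR {i j} (hji : j < i) : R (F i) (F j) := by
    rw [hF i]
    exact hnextR _ _ _ ⟨⟨j, hji⟩, rfl⟩ (hP j)
  have hFR : Pairwise (R on F) := fun i j hij => hij.lt_or_gt.elim (fun h => hsymm _ _ (hR h)) hR
  refine ⟨range F, ?_, forall_mem_range.2 hP, hFR.range_pairwise⟩
  rw [mk_range_eq F (hFR.injective_of_irrefl hirr), mk_ord_toType]

theorem Algebra.adjoin_real_subset_closure_adjoin_rat {A : Type*} [Ring A] [TopologicalSpace A]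
    [IsTopologicalRing A] [Algebra ℝ A] [Algebra ℚ A] [IsScalarTower ℚ ℝ A] [ContinuousSMul ℝ A]
    (s : Set A) : (adjoin ℝ s : Set A) ⊆ closure (adjoin ℚ s) := by
  let Q := (adjoin ℚ s).toSubring.topologicalClosure
  intro a ha
  change a ∈ Q
  induction ha using adjoin_induction with
  | mem x hx => exact subset_closure (subset_adjoin hx)
  | algebraMap r =>
    refine closure_mono ?_ <| (continuous_algebraMap ℝ A).range_subset_closure_image_dense
      Rat.denseRange_cast (mem_range_self r)
    rintro _ ⟨_, ⟨q, rfl⟩, rfl⟩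
    have hq : algebraMap ℝ A q = algebraMap ℚ A q := by
      rw [IsScalarTower.algebraMap_apply ℚ ℝ A, eq_ratCast (algebraMap ℚ ℝ)]
    exact hq ▸ (adjoin ℚ s).algebraMap_mem q
  | add x y _ _ hx hy => exact Q.add_mem hx hy
  | mul x y _ _ hx hy => exact Q.mul_mem hx hy

namespace ContinuousMap

variable {X : Type*} [TopologicalSpace X] [CompactSpace X]

theorem densityCharacter_le_of_separatesPoints {S : Set C(X, ℝ)}
    (hS : ∀ x y, x ≠ y → ∃ g ∈ S, g x ≠ g y) : densityCharacter C(X, ℝ) ≤ max #S ℵ₀ := by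
  have hsep : (Algebra.adjoin ℝ S).SeparatesPoints := fun x y hxy =>
    let ⟨g, hg, hgxy⟩ := hS x y hxy
    ⟨g, ⟨g, Algebra.subset_adjoin hg, rfl⟩, hgxy⟩
  have hdense : Dense (Algebra.adjoin ℚ S : Set C(X, ℝ)) := by
    refine dense_iff_closure_eq.2 (eq_univ_of_forall fun f => ?_)
    have hf : f ∈ closure (Algebra.adjoin ℝ S : Set C(X, ℝ)) := by
      rw [← Subalgebra.topologicalClosure_coe,
        subalgebra_topologicalClosure_eq_top_of_separatesPoints _ hsep]
      trivial
    exact closure_minimal (Algebra.adjoin_real_subset_closure_adjoin_rat S) isClosed_closure hf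
  refine (densityCharacter_le hdense).trans ?_
  simpa [or_comm] using Algebra.lift_cardinalMk_adjoin_le ℚ S

theorem exists_ne_forall_eq_of_mk_lt (hd : ℵ₀ < densityCharacter C(X, ℝ)) {S : Set C(X, ℝ)}
    (hS : #S < densityCharacter C(X, ℝ)) : ∃ x y, x ≠ y ∧ ∀ g ∈ S, g x = g y := by
  by_contra! h
  exact (densityCharacter_le_of_separatesPoints h).not_gt (max_lt hS hd)

theorem one_lt_norm_sub_of_lt_abs {f g : C(X, ℝ)} (x : X) (h : 1 < |f x - g x|) :
    1 < ‖f - g‖ :=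
  h.trans_le (by simpa using (f - g).norm_coe_le_norm x)

end ContinuousMap

open ContinuousMap

theorem locallySignChanging_of_pos_of_neg {X : Type*} [TopologicalSpace X] {f : C(X, ℝ)}
    {C : Set X} (hC : C ⊆ closure (interior C)) (hpos : ∀ x ∉ C, 0 < f x)
    (hneg : ∀ x ∈ interior C, f x < 0) : LocallySignChanging f := by
  intro z _ hz U hU hzU
  have hzC : z ∈ C := by_contra fun h => (hpos z h).ne' hz
  have hz_compl : z ∈ closure Cᶜ := by
    rw [closure_compl]
    exact fun h => (hneg z h).ne hz
  obtain ⟨s, hsU, hs⟩ := mem_closure_iff.1 hz_compl U hU hzU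
  obtain ⟨t, htU, ht⟩ := mem_closure_iff.1 (hC hzC) U hU hzU
  exact ⟨⟨s, hsU, hpos s hs⟩, ⟨t, htU, hneg t ht⟩⟩

section PerfectlyNormal

variable {X : Type*} [TopologicalSpace X] [PerfectlyNormalSpace X]

theorem exists_continuous_pos_iff_mem_eqOn_one {G A : Set X} (hG : IsOpen G) (hA : IsClosed A)
    (hAG : A ⊆ G) :
    ∃ u : C(X, ℝ), (∀ x, u x ∈ Icc (0 : ℝ) 1) ∧ (∀ x, 0 < u x ↔ x ∈ G) ∧ EqOn u 1 A := by
  obtain ⟨h, hzero, h01⟩ :=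
    perfectlyNormalSpace_iff_forall_isClosed_preimage_zero.1 ‹_› _ hG.isClosed_compl
  obtain ⟨v, hv0, hv1, hv01⟩ := exists_continuous_zero_one_of_isClosed hG.isClosed_compl hA
    (disjoint_compl_left_iff_subset.2 hAG)
  have hh0 (x) : h x = 0 ↔ x ∉ G := by
    rw [← mem_compl_iff, hzero, mem_preimage, mem_singleton_iff]
  refine ⟨h ⊔ v, fun x => ⟨le_sup_of_le_left (h01 x).1, sup_le (h01 x).2 (hv01 x).2⟩,
    fun x => ⟨fun hpos => ?_, fun hx => ?_⟩, fun x hx => ?_⟩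
  · by_contra hx
    simp [(hh0 x).2 hx, hv0 hx] at hpos
  · exact lt_sup_of_lt_left ((h01 x).1.lt_of_ne (Ne.symm (mt (hh0 x).1 (not_not.2 hx))))
  · simpa using le_antisymm (sup_le (h01 x).2 (hv01 x).2) (le_sup_of_le_right (by simp [hv1 hx]))

variable [CompactSpace X]

theorem exists_locallySignChanging_eqOn {A B : Set X} (hA : IsClosed A) (hB : IsClosed B)
    (hAB : Disjoint A B) (hAne : A.Nonempty) :
    ∃ f : C(X, ℝ), ‖f‖ = 1 ∧ LocallySignChanging f ∧ EqOn f 1 A ∧ EqOn f (-1) B := by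
  obtain ⟨H, hH, hBH, hHA⟩ :=
    normal_exists_closure_subset hB hA.isOpen_compl (subset_compl_iff_disjoint_left.2 hAB)
  -- `f = u - w` is positive off the regular closed set `closure H` and negative on its interior,
  -- so it vanishes only on its boundary, where it changes sign.
  set C := closure H
  have hHC : H ⊆ interior C := hH.subset_interior_closure
  obtain ⟨u, hu01, hupos, hu1⟩ := exists_continuous_pos_iff_mem_eqOn_one
    isClosed_closure.isOpen_compl hA (subset_compl_comm.1 hHA)
  obtain ⟨w, hw01, hwpos, hw1⟩ :=
    exists_continuous_pos_iff_mem_eqOn_one isOpen_interior hB (hBH.trans hHC)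
  have hu0 (x) (hx : x ∈ C) : u x = 0 :=
    le_antisymm (not_lt.1 fun h => (hupos x).1 h hx) (hu01 x).1
  have hw0 (x) (hx : x ∉ interior C) : w x = 0 :=
    le_antisymm (not_lt.1 fun h => hx ((hwpos x).1 h)) (hw01 x).1
  have hAC {x} (hx : x ∈ A) : x ∉ C := fun h => hHA h hx
  have hfA : EqOn (u - w) 1 A := fun x hx => by
    simp [hu1 hx, hw0 x fun h => hAC hx (interior_subset h)]
  have hfB : EqOn (u - w) (-1) B := fun x hx => by
    simp [hw1 hx, hu0 x (subset_closure (hBH hx))]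
  obtain ⟨a, ha⟩ := hAne
  refine ⟨u - w, le_antisymm ?_ ?_, ?_, hfA, hfB⟩
  · refine (ContinuousMap.norm_le _ zero_le_one).2 fun x => ?_
    rw [Real.norm_eq_abs, abs_le, ContinuousMap.sub_apply]
    constructor <;> linarith [(hu01 x).1, (hu01 x).2, (hw01 x).1, (hw01 x).2]
  · simpa [hfA ha] using (u - w).norm_coe_le_norm a
  · refine locallySignChanging_of_pos_of_neg (closure_mono hHC) (fun x hx => ?_) fun x hx => ?_
    · simpa [hw0 x fun h => hx (interior_subset h)] using (hupos x).2 hx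
    · simpa [hu0 x (interior_subset hx)] using (hwpos x).2 hx

theorem countable_setOf_isOpen_singleton : {x : X | IsOpen ({x} : Set X)}.Countable := by
  set D := {x : X | IsOpen ({x} : Set X)}
  have hD : IsOpen D :=
    isOpen_iff_forall_mem_open.2 fun x hx => ⟨{x}, singleton_subset_iff.2 hx, hx, rfl⟩
  obtain ⟨U, hUo, hU⟩ := isGδ_iff_eq_iInter_nat.1 hD.isClosed_compl.isGδ
  have hDU : D = ⋃ n, (U n)ᶜ := by rw [← compl_iInter, ← hU, compl_compl]
  rw [hDU]
  refine countable_iUnion fun n => ((hUo n).isClosed_compl.isCompact.finite ?_).countable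
  refine isDiscrete_iff_forall_mem_exists_isOpen.2 fun y hy => ⟨{y}, ?_, singleton_inter_of_mem hy⟩
  exact (hDU ▸ mem_iUnion_of_mem n hy : y ∈ D)

variable [T1Space X]

theorem exists_separated_locallySignChanging_of_infinite [Infinite X] :
    ∃ A : Set C(X, ℝ), #A = ℵ₀ ∧
      (∀ f ∈ A, ‖f‖ = 1 ∧ LocallySignChanging f) ∧ A.Pairwise fun f g => 1 < ‖f - g‖ := by
  let x := Infinite.natEmbedding X
  have hf (n : ℕ) : ∃ f : C(X, ℝ), ‖f‖ = 1 ∧ LocallySignChanging f ∧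
      EqOn f 1 {x n} ∧ EqOn f (-1) (x '' Iio n) :=
    exists_locallySignChanging_eqOn isClosed_singleton ((finite_Iio n).image x).isClosed
      (disjoint_singleton_left.2 (by simp [x.injective.mem_set_image]))
      (singleton_nonempty _)
  choose f hf1 hfs hfx hfpast using hf
  have hsep {m n} (hmn : m < n) : 1 < ‖f m - f n‖ := one_lt_norm_sub_of_lt_abs (x m) <| by
    rw [show f m (x m) = 1 by simpa using hfx m rfl,
      show f n (x m) = -1 by simpa using hfpast n (mem_image_of_mem x hmn)]
    norm_num
  have hfR : Pairwise ((fun g h : C(X, ℝ) => 1 < ‖g - h‖) on f) := fun m n hmn =>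
    hmn.lt_or_gt.elim hsep fun h => (hsep h).trans_eq (norm_sub_rev _ _)
  refine ⟨range f, ?_, forall_mem_range.2 fun n => ⟨hf1 n, hfs n⟩, hfR.range_pairwise⟩
  simpa using mk_range_eq_of_injective (hfR.injective_of_irrefl (by simp))

theorem exists_ne_forall_eq_not_isOpen_singleton (hd : ℵ₀ < densityCharacter C(X, ℝ))
    {S : Set C(X, ℝ)} (hS : #S < densityCharacter C(X, ℝ)) :
    ∃ x y, x ≠ y ∧ ¬IsOpen ({x} : Set X) ∧ ∀ g ∈ S, g x = g y := by
  -- Adjoining the indicators of the countably many isolated points keeps `S` small and forces the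
  -- points it fails to separate to be non-isolated.
  have hind (p : {x : X | IsOpen ({x} : Set X)}) :
      ∃ g : C(X, ℝ), EqOn g 0 {p.1}ᶜ ∧ EqOn g 1 {p.1} :=
    let ⟨g, h0, h1, _⟩ := exists_continuous_zero_one_of_isClosed p.2.isClosed_compl
      isClosed_singleton disjoint_compl_left
    ⟨g, h0, h1⟩
  choose g hg0 hg1 using hind
  have hcard : #(S ∪ range g : Set C(X, ℝ)) < densityCharacter C(X, ℝ) := by
    have := countable_setOf_isOpen_singleton (X := X) |>.to_subtype
    exact (mk_union_le _ _).trans_lt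
      (add_lt_of_lt hd.le hS ((countable_range g).le_aleph0.trans_lt hd))
  obtain ⟨x, y, hxy, hxy_eq⟩ := exists_ne_forall_eq_of_mk_lt hd hcard
  refine ⟨x, y, hxy, fun hx => ?_, fun f hf => hxy_eq f (Or.inl hf)⟩
  have := hxy_eq (g ⟨x, hx⟩) (Or.inr (mem_range_self _))
  simp [hg1 _ rfl, hg0 ⟨x, hx⟩ (show y ∈ ({x} : Set X)ᶜ from hxy.symm)] at this

variable [T2Space X]

theorem exists_locallySignChanging_one_lt_norm_sub (hd : ℵ₀ < densityCharacter C(X, ℝ))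
    {S : Set C(X, ℝ)} (hS : #S < densityCharacter C(X, ℝ)) :
    ∃ f : C(X, ℝ), ‖f‖ = 1 ∧ LocallySignChanging f ∧
      ∀ g ∈ S, LocallySignChanging g → 1 < ‖f - g‖ := by
  obtain ⟨x, y, hxy, hx, hxy_eq⟩ := exists_ne_forall_eq_not_isOpen_singleton hd hS
  obtain ⟨U, V, hU, hV, hxU, hyV, hUV⟩ := t2_separation hxy
  have hy : y ∉ closure U := fun hy => (hUV.closure_left hV).ne_of_mem hy hyV rfl
  obtain ⟨f, hf1, hfs, hfU, hfy⟩ := exists_locallySignChanging_eqOn isClosed_closure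
    isClosed_singleton (disjoint_singleton_right.2 hy) ⟨x, subset_closure hxU⟩
  have hfU' (t) (ht : t ∈ U) : f t = 1 := hfU (subset_closure ht)
  refine ⟨f, hf1, hfs, fun g hg hgs => ?_⟩
  -- `f = 1` near `x` and `f y = -1`, while `g x = g y`: whatever the sign of `g x`, `f - g` exceeds
  -- `1` in absolute value somewhere.
  rcases lt_trichotomy (g x) 0 with hneg | hzero | hpos
  · exact one_lt_norm_sub_of_lt_abs x (by rw [hfU' x hxU, abs_of_pos] <;> linarith)
  · obtain ⟨-, t, htU, ht⟩ := hgs x hx hzero U hU hxU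
    exact one_lt_norm_sub_of_lt_abs t (by rw [hfU' t htU, abs_of_pos] <;> linarith)
  · have hfy' : f y = -1 := by simpa using hfy rfl
    have hgy : 0 < g y := hxy_eq g hg ▸ hpos
    exact one_lt_norm_sub_of_lt_abs y (by rw [hfy', abs_of_neg] <;> linarith)

theorem exists_separated_locallySignChanging_of_aleph0_lt
    (hd : ℵ₀ < densityCharacter C(X, ℝ)) :
    ∃ A : Set C(X, ℝ), #A = densityCharacter C(X, ℝ) ∧
      (∀ f ∈ A, ‖f‖ = 1 ∧ LocallySignChanging f) ∧ A.Pairwise fun f g => 1 < ‖f - g‖ :=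
  exists_pairwise_of_forall_mk_lt (fun f => ‖f‖ = 1 ∧ LocallySignChanging f)
    (fun f g h => by rwa [norm_sub_rev]) (fun f => by simp) fun _ hS =>
      let ⟨f, hf1, hfs, hfar⟩ := exists_locallySignChanging_one_lt_norm_sub hd hS
      ⟨f, ⟨hf1, hfs⟩, fun g hg hgP => hfar g hg hgP.2⟩

end PerfectlyNormal

/-- Let `K` be an infinite, perfectly normal, compact Hausdorff space.  Then
the unit sphere of `C(K)` contains a (1+)-separated subset of cardinality
`d(C(K))`; moreover if `K` has no isolated points, such a set can be chosen to
consist of locally sign-changing functions. -/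
theorem separated_set_of_density_in_perfectly_normal
    (K : Type*) [TopologicalSpace K] [CompactSpace K] [T2Space K] [Infinite K]
    (hpn : ∀ F : Set K, IsClosed F → IsGδ F) :
    (∃ A : Set C(K, ℝ), #A = densityCharacter C(K, ℝ) ∧ (∀ f ∈ A, ‖f‖ = 1) ∧
      ∀ f ∈ A, ∀ g ∈ A, f ≠ g → 1 < ‖f - g‖) ∧
    ((∀ z : K, ¬ IsOpen ({z} : Set K)) →
      ∃ A : Set C(K, ℝ), #A = densityCharacter C(K, ℝ) ∧ (∀ f ∈ A, ‖f‖ = 1) ∧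
        (∀ f ∈ A, ∀ g ∈ A, f ≠ g → 1 < ‖f - g‖) ∧
        ∀ f ∈ A, LocallySignChanging f) := by
  have : PerfectlyNormalSpace K := { closed_gdelta := fun F hF => hpn F hF }
  obtain ⟨A, hAcard, hA, hApair⟩ : ∃ A : Set C(K, ℝ), #A = densityCharacter C(K, ℝ) ∧
      (∀ f ∈ A, ‖f‖ = 1 ∧ LocallySignChanging f) ∧ A.Pairwise fun f g => 1 < ‖f - g‖ := by
    rcases (aleph0_le_densityCharacter C(K, ℝ)).lt_or_eq with hd | hd
    · exact exists_separated_locallySignChanging_of_aleph0_lt hd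
    · exact hd ▸ exists_separated_locallySignChanging_of_infinite
  have hA1 : ∀ f ∈ A, ‖f‖ = 1 := fun f hf => (hA f hf).1
  exact ⟨⟨A, hAcard, hA1, hApair⟩, fun _ => ⟨A, hAcard, hA1, hApair, fun f hf => (hA f hf).2⟩⟩
end

section
/- Let K be a non-separable, locally compact Hausdorff space. Then the unit sphere of C₀(K) contains an uncountable (1+)-separated subset; that is, there exists an uncountable set A of norm-one functions in C₀(K) with ‖f − g‖ > 1 for all distinct f, g ∈ A. -/
/-!
Zorn's lemma gives a maximal family of pairs `(f, x)` with `‖f‖ = f x = 1` such that of any two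
pairs, one function is negative at the other's point; this forces `‖f - g‖ > 1`. If the family were
countable, its points would not be dense in `K`. At a point `x₀` outside their closure, a bump at
`x₀` minus a weighted sum of bumps at those points (all vanishing at `x₀`) enlarges the family.
-/

open ZeroAtInfty Set TopologicalSpace

namespace ZeroAtInftyContinuousMap

section Norm

variable {α β : Type*} [TopologicalSpace α] [SeminormedAddCommGroup β]

theorem norm_coe_le_norm (f : C₀(α, β)) (x : α) : ‖f x‖ ≤ ‖f‖ :=
  f.toBCF.norm_coe_le_norm x

theorem norm_le {f : C₀(α, β)} {C : ℝ} (hC : 0 ≤ C) : ‖f‖ ≤ C ↔ ∀ x, ‖f x‖ ≤ C :=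
  f.toBCF.norm_le hC

theorem hasSum_apply {ι : Type*} {F : ι → C₀(α, β)} {f : C₀(α, β)} (hF : HasSum F f) (x : α) :
    HasSum (fun i => F i x) (f x) :=
  hF.map (⟨⟨fun g : C₀(α, β) => g x, rfl⟩, fun _ _ => rfl⟩ : C₀(α, β) →+ β)
    ((BoundedContinuousFunction.lipschitz_eval_const x).continuous.comp
      isometry_toBCF.continuous)

end Norm

variable {K : Type*} [TopologicalSpace K]

theorem norm_eq_one_of_apply_eq_one {f : C₀(K, ℝ)} (hf : ∀ y, |f y| ≤ 1) {x : K}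
    (hx : f x = 1) : ‖f‖ = 1 :=
  le_antisymm ((norm_le zero_le_one).2 hf) (by simpa [hx] using f.norm_coe_le_norm x)

theorem one_lt_norm_sub_of_apply {f g : C₀(K, ℝ)} {x : K} (hf : f x = 1) (hg : g x < 0) :
    1 < ‖f - g‖ :=
  calc 1 < (f - g) x := by rw [sub_apply, hf]; linarith
    _ ≤ ‖f - g‖ := (le_abs_self _).trans ((f - g).norm_coe_le_norm x)

variable [RegularSpace K] [LocallyCompactSpace K]

theorem exists_bump {C : Set K} (hC : IsClosed C) {x : K} (hx : x ∉ C) :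
    ∃ g : C₀(K, ℝ), g x = 1 ∧ (∀ y, g y ∈ Icc (0 : ℝ) 1) ∧ ∀ y ∈ C, g y = 0 := by
  obtain ⟨g, hg1, hg0, hgc, hgI⟩ := exists_continuous_one_zero_of_isCompact
    isCompact_singleton hC (disjoint_singleton_left.2 hx)
  exact ⟨⟨g, hgc.is_zero_at_infty⟩, hg1 rfl, hgI, fun y hy => hg0 hy⟩

variable [T1Space K]

-- `{x₀}` need not be a `Gδ`, so `h` is a weighted sum of countably many bumps.
theorem exists_apply_eq_zero_pos_on_countable {D : Set K} (hD : D.Countable) {x₀ : K}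
    (hx₀ : x₀ ∉ D) :
    ∃ h : C₀(K, ℝ), h x₀ = 0 ∧ (∀ y, h y ∈ Icc (0 : ℝ) 1) ∧ ∀ y ∈ D, 0 < h y := by
  obtain ⟨w, hw_pos, c, hwc, hc⟩ := hD.exists_pos_hasSum_le zero_lt_one
  have hbump : ∀ d : D, ∃ g : C₀(K, ℝ), g d = 1 ∧ (∀ y, g y ∈ Icc (0 : ℝ) 1) ∧ g x₀ = 0 :=
    fun d => (exists_bump isClosed_singleton (ne_of_mem_of_not_mem d.2 hx₀)).imp
      fun g hg => ⟨hg.1, hg.2.1, hg.2.2 x₀ rfl⟩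
  choose H hH1 hHI hH0 using hbump
  have hsum : Summable fun d : D => w d • H d := by
    refine hwc.summable.of_norm_bounded fun d => ?_
    calc ‖w d • H d‖ = w d * ‖H d‖ := by rw [norm_smul, Real.norm_of_nonneg (hw_pos d).le]
      _ ≤ w d * 1 := by
        refine mul_le_mul_of_nonneg_left ((norm_le zero_le_one).2 fun y => ?_) (hw_pos d).le
        rw [Real.norm_of_nonneg (hHI d y).1]
        exact (hHI d y).2
      _ = w d := mul_one _
  set h := ∑' d : D, w d • H d
  have hh : ∀ y, HasSum (fun d : D => w d * H d y) (h y) := fun y => hasSum_apply hsum.hasSum y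
  have hterm_nonneg : ∀ y (d : D), 0 ≤ w d * H d y := fun y d =>
    mul_nonneg (hw_pos d).le (hHI d y).1
  refine ⟨h, ?_, fun y => ⟨?_, ?_⟩, fun y hy => ?_⟩
  · have hx₀sum := hh x₀
    simp only [hH0, mul_zero] at hx₀sum
    exact hx₀sum.unique hasSum_zero
  · exact (hh y).nonneg (hterm_nonneg y)
  · refine (hasSum_le (fun d => ?_) (hh y) hwc).trans hc
    exact mul_le_of_le_one_right (hw_pos d).le (hHI d y).2
  · calc 0 < w y := hw_pos y
      _ = w y * H ⟨y, hy⟩ y := by rw [hH1 ⟨y, hy⟩, mul_one]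
      _ ≤ h y := le_hasSum (hh y) ⟨y, hy⟩ fun d _ => hterm_nonneg y d

theorem exists_norm_eq_one_apply_eq_one_neg_on_countable {D : Set K} (hD : D.Countable)
    {x₀ : K} (hx₀ : x₀ ∉ closure D) :
    ∃ f : C₀(K, ℝ), ‖f‖ = 1 ∧ f x₀ = 1 ∧ ∀ y ∈ D, f y < 0 := by
  obtain ⟨g, hg1, hgI, hg0⟩ := exists_bump isClosed_closure hx₀
  obtain ⟨h, hh0, hhI, hhpos⟩ :=
    exists_apply_eq_zero_pos_on_countable hD fun hx => hx₀ (subset_closure hx)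
  have hx : (g - h) x₀ = 1 := by simp [hg1, hh0]
  refine ⟨g - h, norm_eq_one_of_apply_eq_one (fun y => ?_) hx, hx, fun y hy => ?_⟩
  · obtain ⟨⟨hg0y, hg1y⟩, ⟨hh0y, hh1y⟩⟩ := And.intro (hgI y) (hhI y)
    rw [sub_apply, abs_le]
    constructor <;> linarith
  · simpa [hg0 y (subset_closure hy)] using hhpos y hy

end ZeroAtInftyContinuousMap

open ZeroAtInftyContinuousMap

section PeakSystem

variable {K : Type*} [TopologicalSpace K]

/-- Keeping the peak points is what allows a countable system to be enlarged: they are not dense. -/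
def IsPeakSystem (S : Set (C₀(K, ℝ) × K)) : Prop :=
  (∀ p ∈ S, ‖p.1‖ = 1 ∧ p.1 p.2 = 1) ∧ S.Pairwise fun p q => p.1 q.2 < 0 ∨ q.1 p.2 < 0

namespace IsPeakSystem

variable {S : Set (C₀(K, ℝ) × K)}

theorem one_lt_norm_sub (hS : IsPeakSystem S) {p q : C₀(K, ℝ) × K} (hp : p ∈ S) (hq : q ∈ S)
    (hpq : p ≠ q) : 1 < ‖p.1 - q.1‖ := by
  rcases hS.2 hp hq hpq with hneg | hneg
  · exact norm_sub_rev p.1 q.1 ▸ one_lt_norm_sub_of_apply (hS.1 q hq).2 hneg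
  · exact one_lt_norm_sub_of_apply (hS.1 p hp).2 hneg

theorem injOn_fst (hS : IsPeakSystem S) : InjOn Prod.fst S := fun p hp q hq hpq => by
  by_contra hne
  exact absurd (hS.one_lt_norm_sub hp hq hne) (by simp [hpq])

theorem insert (hS : IsPeakSystem S) {f : C₀(K, ℝ)} {x : K} (hf : ‖f‖ = 1) (hfx : f x = 1)
    (hneg : ∀ p ∈ S, f p.2 < 0) : IsPeakSystem (insert (f, x) S) := by
  refine ⟨fun p hp => ?_, ?_⟩
  · rcases hp with rfl | hp
    exacts [⟨hf, hfx⟩, hS.1 p hp]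
  · exact hS.2.insert fun p hp _ => ⟨Or.inl (hneg p hp), Or.inr (hneg p hp)⟩

end IsPeakSystem

variable (K) in
theorem exists_maximal_isPeakSystem :
    ∃ M : Set (C₀(K, ℝ) × K), Maximal IsPeakSystem M := by
  refine zorn_subset {S | IsPeakSystem S} fun c hc hchain =>
    ⟨⋃₀ c, ⟨?_, ?_⟩, fun s => subset_sUnion_of_mem⟩
  · rintro p ⟨s, hs, hp⟩
    exact (hc hs).1 p hp
  · exact hchain.pairwise_sUnion.2 fun s hs => (hc hs).2

theorem not_countable_of_maximal_isPeakSystem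
    [RegularSpace K] [LocallyCompactSpace K] [T1Space K]
    (hK : ¬ SeparableSpace K) {M : Set (C₀(K, ℝ) × K)} (hM : Maximal IsPeakSystem M) :
    ¬ M.Countable := by
  intro hMc
  have hDc : (Prod.snd '' M).Countable := hMc.image _
  obtain ⟨x₀, hx₀⟩ : ∃ x₀, x₀ ∉ closure (Prod.snd '' M) := by
    by_contra! hdense
    exact hK ⟨⟨_, hDc, fun x => hdense x⟩⟩
  obtain ⟨f, hf, hfx, hneg⟩ := exists_norm_eq_one_apply_eq_one_neg_on_countable hDc hx₀
  have hnew : (f, x₀) ∉ M := fun hmem => hx₀ (subset_closure ⟨_, hmem, rfl⟩)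
  exact hnew (hM.mem_of_prop_insert
    (hM.prop.insert hf hfx fun p hp => hneg p.2 ⟨p, hp, rfl⟩))

end PeakSystem

/-- Let `K` be a non-separable, locally compact Hausdorff space.  Then the
unit sphere of `C₀(K)` contains an uncountable (1+)-separated subset. -/
theorem uncountable_separated_in_C0_of_nonseparable
    (K : Type*) [TopologicalSpace K] [LocallyCompactSpace K] [T2Space K]
    (hnonsep : ¬ TopologicalSpace.SeparableSpace K) :
    ∃ A : Set C₀(K, ℝ), ¬ A.Countable ∧ (∀ f ∈ A, ‖f‖ = 1) ∧
      ∀ f ∈ A, ∀ g ∈ A, f ≠ g → 1 < ‖f - g‖ := by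
  obtain ⟨M, hM⟩ := exists_maximal_isPeakSystem K
  refine ⟨Prod.fst '' M, fun hA => not_countable_of_maximal_isPeakSystem hnonsep hM
    (countable_of_injective_of_countable_image hM.prop.injOn_fst hA), ?_, ?_⟩
  · rintro _ ⟨p, hp, rfl⟩
    exact (hM.prop.1 p hp).1
  · rintro _ ⟨p, hp, rfl⟩ _ ⟨q, hq, rfl⟩ hne
    exact hM.prop.one_lt_norm_sub hp hq fun hpq => hne (congrArg Prod.fst hpq)
end
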